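/- For any sequence of real numbers {a_i}_{i≥1}, sup_{n≥1} (1/n) | Σ_{i=1}^{n} a_i | ≤ 2 · sup_{n≥1} | Σ_{i=1}^{n} a_i / i |, where both suprema are taken in [0, ∞]. -/

import Mathlib

open MeasureTheory Filter Finset
open scoped ENNReal

/-! Writing `T k = ∑_{i ≤ k} a i / i`, Abel summation gives `∑_{i ≤ n} a i = n T n - ∑_{k < n} T k`,
so if every `|T k|` is at most `M` then `|∑_{i ≤ n} a i| ≤ 2 n M`. -/

theorem sum_Icc_eq_mul_sub_sum_range (a : ℕ → ℝ) (n : ℕ) :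
    ∑ i ∈ Icc 1 n, a i =
      n * ∑ i ∈ Icc 1 n, a i / i - ∑ k ∈ range n, ∑ i ∈ Icc 1 k, a i / i := by
  induction n with
  | zero => simp
  | succ n ih =>
    rw [sum_Icc_succ_top (by omega), sum_Icc_succ_top (by omega), sum_range_succ, ih]
    have : (n : ℝ) + 1 ≠ 0 := by positivity
    push_cast
    field_simp
    ring

theorem abs_sum_Icc_le_two_mul {a : ℕ → ℝ} {M : ℝ}
    (hM : ∀ k, |∑ i ∈ Icc 1 k, a i / i| ≤ M) (n : ℕ) :
    |∑ i ∈ Icc 1 n, a i| ≤ 2 * n * M := by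
  rw [sum_Icc_eq_mul_sub_sum_range]
  calc _ ≤ |n * ∑ i ∈ Icc 1 n, a i / i| + |∑ k ∈ range n, ∑ i ∈ Icc 1 k, a i / i| :=
        abs_sub _ _
    _ ≤ n * M + ∑ _k ∈ range n, M := by
        rw [abs_mul, Nat.abs_cast]
        gcongr
        · exact hM n
        · exact (abs_sum_le_sum_abs _ _).trans (sum_le_sum fun k _ => hM k)
    _ = 2 * n * M := by
        rw [sum_const, card_range, nsmul_eq_mul]
        ring

/-- **Elton's Lemma 7**: for any sequence of reals `{a_i}`,
`sup_{n ≥ 1} (1/n) |∑_{i=1}^n a_i| ≤ 2 · sup_{n ≥ 1} |∑_{i=1}^n a_i / i|`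
(in the extended reals `[0, ∞]`). -/
theorem sup_avg_le_two_mul_sup_weighted (a : ℕ → ℝ) :
    (⨆ n : ℕ, ENNReal.ofReal
        ((1 / ((n : ℝ) + 1)) * |∑ i ∈ Finset.Icc 1 (n + 1), a i|)) ≤
      2 * ⨆ n : ℕ, ENNReal.ofReal |∑ i ∈ Finset.Icc 1 (n + 1), a i / (i : ℝ)| := by
  set B := ⨆ n : ℕ, ENNReal.ofReal |∑ i ∈ Icc 1 (n + 1), a i / (i : ℝ)|
  rcases eq_or_ne B ⊤ with hB | hB
  · simp [hB]
  have hT : ∀ k, |∑ i ∈ Icc 1 k, a i / i| ≤ B.toReal := by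
    rintro (_ | k)
    · simp
    · exact (ENNReal.ofReal_le_iff_le_toReal hB).1
        (le_iSup (fun n => ENNReal.ofReal |∑ i ∈ Icc 1 (n + 1), a i / (i : ℝ)|) k)
  refine iSup_le fun n => ?_
  rw [← ENNReal.ofReal_toReal hB, ← ENNReal.ofReal_ofNat 2, ← ENNReal.ofReal_mul (by norm_num)]
  refine ENNReal.ofReal_le_ofReal ?_
  rw [one_div_mul_eq_div, div_le_iff₀ (by positivity)]
  have := abs_sum_Icc_le_two_mul hT (n + 1)
  push_cast at this
  linarith
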